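/- Let X be a finite-dimensional real vector space and q an asymmetric norm on X. Let E denote the set of extreme points of B_1^q[0] + θ_q, and let S = conv(E) be its convex hull. Then B_1^q[0] = S + θ_q. -/

import Mathlib

open Pointwise Set

/-- An asymmetric norm on a real vector space `X`. -/
structure IsAsymmetricNorm {X : Type*} [AddCommGroup X] [Module ℝ X] (q : X → ℝ) : Prop where
  nonneg : ∀ x, 0 ≤ q x
  smul_eq : ∀ a : ℝ, 0 ≤ a → ∀ x, q (a • x) = a * q x
  add_le : ∀ x y, q (x + y) ≤ q x + q y
  eq_zero : ∀ x, q x = 0 → q (-x) = 0 → x = 0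

/-- The topology `τ_q` generated by the open balls of `q`. -/
def asymTop {X : Type*} [AddCommGroup X] [Module ℝ X] (q : X → ℝ) : TopologicalSpace X :=
  TopologicalSpace.generateFrom {U | ∃ x : X, ∃ ε : ℝ, 0 < ε ∧ U = {y | q (y - x) < ε}}

/-- The symmetrization `q^s` of `q`. -/
def symNorm {X : Type*} [AddCommGroup X] (q : X → ℝ) (x : X) : ℝ := max (q x) (q (-x))

/-- The cone `θ_q = {x : q x = 0}`. -/
def theta {X : Type*} [AddCommGroup X] (q : X → ℝ) : Set X := {x | q x = 0}

/-- The closed ball `B_r^q[x] = {y : q (y - x) ≤ r}`. -/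
def closedBallA {X : Type*} [AddCommGroup X] (q : X → ℝ) (x : X) (r : ℝ) : Set X :=
  {y | q (y - x) ≤ r}

/-- A set `K` is strongly compact (w.r.t. the asymmetric norm `q`) if there is a set `S`,
compact in the topology of the norm `q^s`, with `S ⊆ K ⊆ S + θ_q`. -/
def StronglyCompact {X : Type*} [AddCommGroup X] [Module ℝ X] (q : X → ℝ) (K : Set X) : Prop :=
  ∃ S : Set X, @IsCompact X (asymTop (symNorm q)) S ∧ S ⊆ K ∧ K ⊆ S + theta q

/-- `q` is right bounded if `r • B_1^q[0] ⊆ B_1^{q^s}[0] + θ_q` for some `r > 0`. -/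
def RightBounded {X : Type*} [AddCommGroup X] [Module ℝ X] (q : X → ℝ) : Prop :=
  ∃ r : ℝ, 0 < r ∧ r • closedBallA q 0 1 ⊆ closedBallA (symNorm q) 0 1 + theta q

/-- `q` is 1-bounded if `B_1^q[0] ⊆ B_1^{q^s}[0] + θ_q`. -/
def OneBounded {X : Type*} [AddCommGroup X] [Module ℝ X] (q : X → ℝ) : Prop :=
  closedBallA q 0 1 ⊆ closedBallA (symNorm q) 0 1 + theta q

/-- Two asymmetric norms are equivalent if `κ·q ≤ p ≤ l·q` for some `κ, l > 0`. -/
def EquivNorms {X : Type*} [AddCommGroup X] (p q : X → ℝ) : Prop :=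
  ∃ κ l : ℝ, 0 < κ ∧ 0 < l ∧ ∀ x, κ * q x ≤ p x ∧ p x ≤ l * q x

/-- `X` is strongly locally compact (w.r.t. `τ_q`) if every point has a local base of
strongly compact sets. -/
def StronglyLocallyCompact {X : Type*} [AddCommGroup X] [Module ℝ X] (q : X → ℝ) : Prop :=
  ∀ x : X, ∀ U ∈ @nhds X (asymTop q) x,
    ∃ K : Set X, StronglyCompact q K ∧ K ∈ @nhds X (asymTop q) x ∧ K ⊆ U

/-! The unit ball `B` of `q` is closed and convex, `B + θ_q = B`, its recession cone is exactly
`θ_q`, and it contains no line since `q v = q (-v) = 0` forces `v = 0`. So the statement is Klee's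
theorem: a closed convex line-free set in a finite-dimensional space is the convex hull of its
extreme points plus its recession cone. Klee's theorem goes by induction on the dimension of the
affine span. After restricting to the affine span, the set has interior; every point then lies
between the two boundary points of a chord, or on a recession ray issuing from one boundary point,
and every boundary point lies in an exposed face of smaller dimension, whose extreme points are
extreme points of the set. -/

open Module Filter Topology

universe u

section Recession

variable {E F : Type*} [AddCommGroup E] [Module ℝ E] [AddCommGroup F] [Module ℝ F]
  {A : Set E} {x v w : E}

def recessionCone (A : Set E) : Set E :=
  {v | ∀ x ∈ A, ∀ t : ℝ, 0 ≤ t → x + t • v ∈ A}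

def LineFree (A : Set E) : Prop :=
  ∀ x ∈ A, ∀ v : E, (∀ t : ℝ, x + t • v ∈ A) → v = 0

lemma zero_mem_recessionCone : (0 : E) ∈ recessionCone A := fun x hx _ _ => by
  simpa using hx

lemma add_mem_recessionCone (hv : v ∈ recessionCone A) (hw : w ∈ recessionCone A) :
    v + w ∈ recessionCone A := fun x hx t ht => by
  simpa only [smul_add, add_assoc] using hw _ (hv x hx t ht) t ht

lemma smul_mem_recessionCone {a : ℝ} (ha : 0 ≤ a) (hv : v ∈ recessionCone A) :
    a • v ∈ recessionCone A := fun x hx t ht => by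
  simpa only [smul_smul] using hv x hx (t * a) (mul_nonneg ht ha)

lemma convex_recessionCone (A : Set E) : Convex ℝ (recessionCone A) :=
  fun _ hv _ hw _ _ ha hb _ => add_mem_recessionCone (smul_mem_recessionCone ha hv)
    (smul_mem_recessionCone hb hw)

lemma add_recessionCone_subset (A : Set E) : A + recessionCone A ⊆ A := by
  rintro _ ⟨x, hx, v, hv, rfl⟩
  simpa using hv x hx 1 zero_le_one

lemma LineFree.mono {B : Set E} (hA : LineFree A) (hBA : B ⊆ A) : LineFree B :=
  fun x hx v hv => hA x (hBA hx) v fun t => hBA (hv t)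

lemma AffineMap.map_add_eq (g : F →ᵃ[ℝ] E) (x v : F) : g (x + v) = g x + g.linear v := by
  rw [add_comm x, ← vadd_eq_add, AffineMap.map_vadd, vadd_eq_add, add_comm]

lemma LineFree.affine_preimage (hA : LineFree A) (g : F →ᵃ[ℝ] E)
    (hg : Function.Injective g) : LineFree (g ⁻¹' A) := by
  intro x hx v hv
  refine (AffineMap.linear_injective_iff g).2 hg ((map_zero g.linear).symm ▸ ?_)
  refine hA (g x) hx (g.linear v) fun t => ?_
  have hxt := hv t
  rwa [Set.mem_preimage, g.map_add_eq, map_smul] at hxt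

lemma AffineMap.image_extremePoints_subset (g : F →ᵃ[ℝ] E) (hg : Function.Injective g)
    (s : Set F) : g '' s.extremePoints ℝ ⊆ (g '' s).extremePoints ℝ := by
  rintro _ ⟨x, hx, rfl⟩
  refine mem_extremePoints_iff_left.2 ⟨Set.mem_image_of_mem g hx.1, ?_⟩
  rintro _ ⟨y, hy, rfl⟩ _ ⟨z, hz, rfl⟩ hseg
  rw [← image_openSegment] at hseg
  obtain ⟨c, hc, hcx⟩ := hseg
  rw [hg hcx] at hc
  rw [(mem_extremePoints_iff_left.1 hx).2 y hy z hz hc]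

lemma Convex.setOf_add_smul_mem (hco : Convex ℝ A) (x v : E) :
    Convex ℝ {t : ℝ | x + t • v ∈ A} := by
  intro s hs t ht a b ha hb hab
  show x + (a • s + b • t) • v ∈ A
  convert hco hs ht ha hb hab using 1
  conv_lhs => rw [← one_smul ℝ x, ← hab]
  module

lemma forall_add_smul_mem_of_not_bddAbove (hco : Convex ℝ A) (hx : x ∈ A)
    (h : ¬BddAbove {t : ℝ | x + t • v ∈ A}) (t : ℝ) (ht : 0 ≤ t) : x + t • v ∈ A := by
  obtain ⟨s, hs, hts⟩ := not_bddAbove_iff.1 h t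
  exact (hco.setOf_add_smul_mem x v).ordConnected.out (by simpa using hx) hs ⟨ht, hts.le⟩

lemma LineFree.bddAbove_or_bddAbove_neg (hlf : LineFree A) (hco : Convex ℝ A) (hx : x ∈ A)
    (hv : v ≠ 0) : BddAbove {t : ℝ | x + t • v ∈ A} ∨ BddAbove {t : ℝ | x + t • -v ∈ A} := by
  by_contra! h
  refine hv (hlf x hx v fun t => ?_)
  rcases le_total 0 t with ht | ht
  · exact forall_add_smul_mem_of_not_bddAbove hco hx h.1 t ht
  · simpa using forall_add_smul_mem_of_not_bddAbove hco hx h.2 (-t) (neg_nonneg.2 ht)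

lemma add_mem_add_recessionCone {S : Set E} {z : E} (hz : z ∈ S + recessionCone A)
    (hv : v ∈ recessionCone A) : z + v ∈ S + recessionCone A := by
  obtain ⟨u, hu, r, hr, rfl⟩ := hz
  exact ⟨u, hu, r + v, add_mem_recessionCone hr hv, (add_assoc u r v).symm⟩

def HasKleeDecomposition (A : Set E) : Prop :=
  A ⊆ convexHull ℝ (A.extremePoints ℝ) + recessionCone A

lemma HasKleeDecomposition.of_affine_preimage (g : F →ᵃ[ℝ] E) (hg : Function.Injective g)
    (hA : A ⊆ Set.range g) (h : HasKleeDecomposition (g ⁻¹' A)) : HasKleeDecomposition A := by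
  intro x hx
  obtain ⟨w, rfl⟩ := hA hx
  obtain ⟨u, hu, r, hr, rfl⟩ := h hx
  refine ⟨g u, ?_, g.linear r, ?_, (g.map_add_eq u r).symm⟩
  · have hgu := Set.mem_image_of_mem g hu
    rw [AffineMap.image_convexHull] at hgu
    refine convexHull_mono ?_ hgu
    simpa only [Set.image_preimage_eq_of_subset hA] using
      g.image_extremePoints_subset hg (g ⁻¹' A)
  · rintro _ hy t ht
    obtain ⟨y, rfl⟩ := hA hy
    have hyt := hr y hy t ht
    rwa [Set.mem_preimage, g.map_add_eq, map_smul] at hyt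

end Recession

section Normed

variable {E : Type*} [NormedAddCommGroup E] [NormedSpace ℝ E] {A : Set E} {x v : E}

lemma mem_recessionCone_of_forall_add_smul_mem (hcl : IsClosed A) (hco : Convex ℝ A) {z : E}
    (h : ∀ t : ℝ, 0 ≤ t → z + t • v ∈ A) : v ∈ recessionCone A := by
  intro y hy t ht
  have hlim : Tendsto (fun s : ℝ => (1 - t / s) • y + (t / s) • (z + s • v)) atTop
      (𝓝 (y + t • v)) := by
    have h0 : Tendsto (fun s : ℝ => t / s) atTop (𝓝 0) := tendsto_const_nhds.div_atTop tendsto_id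
    refine Tendsto.congr' ?_ (by simpa using tendsto_const_nhds.add (h0.smul_const (z - y)))
    filter_upwards [eventually_gt_atTop (0 : ℝ)] with s hs
    rw [smul_add, smul_smul, div_mul_cancel₀ t hs.ne']
    module
  refine hcl.mem_of_tendsto hlim ?_
  filter_upwards [eventually_ge_atTop t, eventually_gt_atTop (0 : ℝ)] with s hts hs
  exact hco hy (h s hs.le) (sub_nonneg.2 ((div_le_one hs).2 hts)) (div_nonneg ht hs.le) (by ring)

lemma recessionCone_subset_of_subset (hcl : IsClosed A) (hco : Convex ℝ A) {F : Set E}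
    (hFA : F ⊆ A) (hF : F.Nonempty) : recessionCone F ⊆ recessionCone A := by
  obtain ⟨z, hz⟩ := hF
  exact fun v hv => mem_recessionCone_of_forall_add_smul_mem hcl hco
    fun t ht => hFA (hv z hz t ht)

lemma add_csSup_smul_mem_frontier (hcl : IsClosed A) (hx : x ∈ A)
    (hbdd : BddAbove {t : ℝ | x + t • v ∈ A}) :
    x + sSup {t : ℝ | x + t • v ∈ A} • v ∈ frontier A := by
  have hline : Continuous fun t : ℝ => x + t • v := by fun_prop
  have hI : IsClosed {t : ℝ | x + t • v ∈ A} := hcl.preimage hline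
  refine ⟨subset_closure (hI.csSup_mem ⟨0, by simpa using hx⟩ hbdd), fun hint => ?_⟩
  obtain ⟨s, hs, hsA⟩ :=
    Filter.Eventually.exists_gt ((isOpen_interior.preimage hline).mem_nhds hint)
  exact (le_csSup hbdd (show x + s • v ∈ A from interior_subset hsA)).not_gt hs

end Normed

def KleeTheoremInDim (n : ℕ) : Prop :=
  ∀ (E : Type u) [NormedAddCommGroup E] [NormedSpace ℝ E] [FiniteDimensional ℝ E] (A : Set E),
    IsClosed A → Convex ℝ A → LineFree A → finrank ℝ (affineSpan ℝ A).direction ≤ n →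
    HasKleeDecomposition A

section FiniteDimensional

variable {E : Type u} [NormedAddCommGroup E] [NormedSpace ℝ E] [FiniteDimensional ℝ E]
  {A : Set E} {x v z : E}

lemma exists_isExposed_mem_finrank_lt (hcl : IsClosed A) (hco : Convex ℝ A)
    (hint : (interior A).Nonempty) (hz : z ∈ frontier A) :
    ∃ F, IsExposed ℝ A F ∧ z ∈ F ∧ finrank ℝ (affineSpan ℝ F).direction < finrank ℝ E := by
  obtain ⟨f, hf⟩ := geometric_hahn_banach_open_point hco.interior isOpen_interior hz.2
  have hfA : ∀ a ∈ A, f a ≤ f z := by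
    intro a ha
    have ha' : a ∈ closure (interior A) := by
      rw [hco.closure_interior_eq_closure_of_nonempty_interior hint]
      exact subset_closure ha
    exact closure_minimal (fun b hb => (hf b hb).le) (isClosed_le f.continuous continuous_const) ha'
  have hzA : z ∈ A := hcl.frontier_subset hz
  refine ⟨f.toExposed A, ContinuousLinearMap.toExposed.isExposed, ⟨hzA, hfA⟩, ?_⟩
  have hspan :
      affineSpan ℝ (f.toExposed A) ≤ AffineSubspace.mk' z (LinearMap.ker f.toLinearMap) :=
    affineSpan_le_of_subset_coe fun y hy => by
      rw [SetLike.mem_coe, AffineSubspace.mem_mk', vsub_eq_sub, LinearMap.mem_ker,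
        ContinuousLinearMap.coe_coe, map_sub, sub_eq_zero]
      exact le_antisymm (hfA y hy.1) (hy.2 z hzA)
  have hker : LinearMap.ker f.toLinearMap ≠ ⊤ := by
    obtain ⟨a, ha⟩ := hint
    intro htop
    have hfa : f (a - z) = 0 := LinearMap.mem_ker.1 (htop ▸ Submodule.mem_top)
    rw [map_sub, sub_eq_zero] at hfa
    exact (hf a ha).ne hfa
  calc finrank ℝ (affineSpan ℝ (f.toExposed A)).direction
      ≤ finrank ℝ (LinearMap.ker f.toLinearMap) := by
        simpa using Submodule.finrank_mono
          ((AffineSubspace.direction_le hspan).trans (AffineSubspace.direction_mk' _ _).le)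
    _ < finrank ℝ E := Submodule.finrank_lt hker

variable (IH : ∀ m < finrank ℝ E, KleeTheoremInDim.{u} m) (hcl : IsClosed A) (hco : Convex ℝ A)
  (hlf : LineFree A) (hint : (interior A).Nonempty)
include IH hcl hco hlf hint

lemma mem_convexHull_extremePoints_add_recessionCone_of_mem_frontier (hz : z ∈ frontier A) :
    z ∈ convexHull ℝ (A.extremePoints ℝ) + recessionCone A := by
  obtain ⟨F, hF, hzF, hdim⟩ := exists_isExposed_mem_finrank_lt hcl hco hint hz
  obtain ⟨u, hu, r, hr, rfl⟩ :=
    IH _ hdim E F (hF.isClosed hcl) (hF.convex hco) (hlf.mono hF.subset) le_rfl hzF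
  exact ⟨u, convexHull_mono hF.isExtreme.extremePoints_subset_extremePoints hu, r,
    recessionCone_subset_of_subset hcl hco hF.subset ⟨_, hzF⟩ hr, rfl⟩

lemma mem_convexHull_extremePoints_add_recessionCone_of_bddAbove (hx : x ∈ A)
    (hbdd : BddAbove {t : ℝ | x + t • v ∈ A}) :
    x ∈ convexHull ℝ (A.extremePoints ℝ) + recessionCone A := by
  have hT : Convex ℝ (convexHull ℝ (A.extremePoints ℝ) + recessionCone A) :=
    (convex_convexHull ℝ _).add (convex_recessionCone A)
  have hb : 0 ≤ sSup {t : ℝ | x + t • v ∈ A} := le_csSup hbdd (by simpa using hx)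
  have hz := mem_convexHull_extremePoints_add_recessionCone_of_mem_frontier
    IH hcl hco hlf hint (add_csSup_smul_mem_frontier hcl hx hbdd)
  by_cases hbdd' : BddAbove {t : ℝ | x + t • -v ∈ A}
  · have hs : 0 ≤ sSup {t : ℝ | x + t • -v ∈ A} := le_csSup hbdd' (by simpa using hx)
    have hz' := mem_convexHull_extremePoints_add_recessionCone_of_mem_frontier
      IH hcl hco hlf hint (add_csSup_smul_mem_frontier hcl hx hbdd')
    refine hT.segment_subset hz' hz ?_
    have hline (t : ℝ) : AffineMap.lineMap x (x + v) t = x + t • v := by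
      simp [AffineMap.lineMap_apply_module', add_comm]
    have h0 : (0 : ℝ) ∈
        segment ℝ (-sSup {t : ℝ | x + t • -v ∈ A}) (sSup {t : ℝ | x + t • v ∈ A}) := by
      rw [segment_eq_Icc (by linarith)]
      exact ⟨by linarith, hb⟩
    have hx' := Set.mem_image_of_mem (AffineMap.lineMap x (x + v)) h0
    rwa [image_segment, hline, hline, hline, zero_smul, add_zero, neg_smul, ← smul_neg] at hx'
  · have hrec : -v ∈ recessionCone A := mem_recessionCone_of_forall_add_smul_mem hcl hco
      (forall_add_smul_mem_of_not_bddAbove hco hx hbdd')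
    have hx' := add_mem_add_recessionCone hz (smul_mem_recessionCone hb hrec)
    rwa [smul_neg, add_neg_cancel_right] at hx'

lemma hasKleeDecomposition_of_interior_nonempty : HasKleeDecomposition A := by
  intro x hx
  rcases subsingleton_or_nontrivial E with hE | hE
  · exact ⟨x, subset_convexHull ℝ _ (by rwa [Set.extremePoints_eq_self]), 0,
      zero_mem_recessionCone, add_zero x⟩
  obtain ⟨v, hv⟩ := exists_ne (0 : E)
  rcases hlf.bddAbove_or_bddAbove_neg hco hx hv with h | h
  · exact mem_convexHull_extremePoints_add_recessionCone_of_bddAbove IH hcl hco hlf hint hx h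
  · exact mem_convexHull_extremePoints_add_recessionCone_of_bddAbove IH hcl hco hlf hint hx h

end FiniteDimensional

theorem kleeTheoremInDim (n : ℕ) : KleeTheoremInDim.{u} n := by
  induction n using Nat.strong_induction_on with
  | _ n IH =>
  intro E _ _ _ A hcl hco hlf hdim x hx
  set W := (affineSpan ℝ A).direction
  let g : W →ᵃ[ℝ] E := (AffineEquiv.vaddConst ℝ x).toAffineMap.comp W.subtype.toAffineMap
  have hg : Function.Injective g :=
    (AffineEquiv.vaddConst ℝ x).injective.comp W.injective_subtype
  have hA : A ⊆ Set.range g := fun a ha => ⟨⟨a - x, AffineSubspace.vsub_mem_direction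
    (subset_affineSpan ℝ A ha) (subset_affineSpan ℝ A hx)⟩, by simp [g]⟩
  have hspan : affineSpan ℝ (g ⁻¹' A) = ⊤ := by
    have hne : (affineSpan ℝ (g ⁻¹' A) : Set W).Nonempty :=
      ⟨0, subset_affineSpan ℝ _ (by simpa [g] using hx)⟩
    rw [← AffineSubspace.direction_eq_top_iff_of_nonempty hne]
    refine Submodule.map_injective_of_injective W.injective_subtype ?_
    have hmap := congrArg AffineSubspace.direction (AffineSubspace.map_span g (g ⁻¹' A))
    rw [Set.image_preimage_eq_of_subset hA, AffineSubspace.map_direction] at hmap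
    rw [Submodule.map_subtype_top]
    exact hmap
  have hco' : Convex ℝ (g ⁻¹' A) := hco.affine_preimage g
  refine HasKleeDecomposition.of_affine_preimage g hg hA ?_ hx
  exact hasKleeDecomposition_of_interior_nonempty (fun m hm => IH m (hm.trans_le hdim))
    (hcl.preimage g.continuous_of_finiteDimensional) hco' (hlf.affine_preimage g hg)
    (hco'.interior_nonempty_iff_affineSpan_eq_top.2 hspan)

theorem convexHull_extremePoints_add_recessionCone_eq {E : Type*} [NormedAddCommGroup E]
    [NormedSpace ℝ E] [FiniteDimensional ℝ E] {A : Set E} (hcl : IsClosed A) (hco : Convex ℝ A)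
    (hlf : LineFree A) : convexHull ℝ (A.extremePoints ℝ) + recessionCone A = A :=
  ((Set.add_subset_add_right (convexHull_min extremePoints_subset hco)).trans
    (add_recessionCone_subset A)).antisymm (kleeTheoremInDim _ _ A hcl hco hlf le_rfl)

lemma mem_closedBallA_zero {X : Type*} [AddCommGroup X] {q : X → ℝ} {r : ℝ} {y : X} :
    y ∈ closedBallA q 0 r ↔ q y ≤ r := by
  simp [closedBallA]

namespace IsAsymmetricNorm

section VectorSpace

variable {X : Type*} [AddCommGroup X] [Module ℝ X] {q : X → ℝ} {r : ℝ} (hq : IsAsymmetricNorm q)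
include hq

lemma map_zero : q 0 = 0 := by
  simpa using hq.smul_eq 0 le_rfl 0

lemma convexOn : ConvexOn ℝ Set.univ q :=
  ⟨convex_univ, fun x _ y _ a b ha hb _ => by
    simpa only [hq.smul_eq a ha, hq.smul_eq b hb, smul_eq_mul] using hq.add_le (a • x) (b • y)⟩

lemma eq_zero_of_forall_smul_le {v : X} {C : ℝ} (h : ∀ t : ℝ, 0 ≤ t → q (t • v) ≤ C) :
    q v = 0 := by
  by_contra hne
  have hpos : 0 < q v := (hq.nonneg v).lt_of_ne' hne
  have hC := h ((|C| + 1) / q v) (by positivity)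
  rw [hq.smul_eq _ (by positivity), div_mul_cancel₀ _ hpos.ne'] at hC
  linarith [le_abs_self C]

lemma closedBallA_add_theta : closedBallA q 0 r + theta q = closedBallA q 0 r := by
  refine (Set.add_subset_iff.2 fun y hy v hv => ?_).antisymm
    fun y hy => ⟨y, hy, 0, hq.map_zero, add_zero y⟩
  rw [mem_closedBallA_zero] at hy ⊢
  have hv' : q v = 0 := hv
  linarith [hq.add_le y v]

lemma recessionCone_closedBallA (hr : 0 ≤ r) :
    recessionCone (closedBallA q 0 r) = theta q := by
  refine Set.Subset.antisymm (fun v hv => hq.eq_zero_of_forall_smul_le (C := r) fun t ht => ?_)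
    fun v hv y hy t ht => ?_
  · simpa [mem_closedBallA_zero] using hv 0 (mem_closedBallA_zero.2 (hq.map_zero.symm ▸ hr)) t ht
  · have hv' : q v = 0 := hv
    rw [mem_closedBallA_zero] at hy ⊢
    have hyv := hq.add_le y (t • v)
    rw [hq.smul_eq t ht, hv', mul_zero] at hyv
    linarith

lemma lineFree_closedBallA : LineFree (closedBallA q 0 r) := by
  intro x hx v hv
  have hray (w : X) (hw : ∀ t : ℝ, 0 ≤ t → x + t • w ∈ closedBallA q 0 r) : q w = 0 :=
    hq.eq_zero_of_forall_smul_le (C := r + q (-x)) fun t ht => by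
      have hsub := hq.add_le (x + t • w) (-x)
      rw [add_neg_cancel_comm] at hsub
      linarith [mem_closedBallA_zero.1 (hw t ht)]
  exact hq.eq_zero v (hray v fun t _ => hv t) (hray (-v) fun t _ => by simpa using hv (-t))

end VectorSpace

section FiniteDimensional

variable {X : Type*} [NormedAddCommGroup X] [NormedSpace ℝ X] [FiniteDimensional ℝ X]
  {q : X → ℝ} (hq : IsAsymmetricNorm q)
include hq

lemma continuous : Continuous q :=
  continuousOn_univ.1 (hq.convexOn.continuousOn isOpen_univ)

lemma closedBallA_eq_convexHull_extremePoints_add_theta {r : ℝ} (hr : 0 ≤ r) :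
    closedBallA q 0 r =
      convexHull ℝ ((closedBallA q 0 r + theta q).extremePoints ℝ) + theta q := by
  have hcl : IsClosed (closedBallA q 0 r) := by
    simpa only [closedBallA, sub_zero] using isClosed_le hq.continuous continuous_const
  have hco : Convex ℝ (closedBallA q 0 r) := by
    simpa only [closedBallA, sub_zero, Set.mem_univ, true_and] using hq.convexOn.convex_le r
  rw [hq.closedBallA_add_theta, ← hq.recessionCone_closedBallA hr,
    convexHull_extremePoints_add_recessionCone_eq hcl hco hq.lineFree_closedBallA]

end FiniteDimensional

end IsAsymmetricNorm

theorem statement17 {X : Type*} [AddCommGroup X] [Module ℝ X] [FiniteDimensional ℝ X]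
    (q : X → ℝ) (hq : IsAsymmetricNorm q) :
    closedBallA q 0 1 =
      convexHull ℝ (Set.extremePoints ℝ (closedBallA q 0 1 + theta q)) + theta q := by
  let e := (Module.finBasis ℝ X).equivFun
  let _ := NormedAddCommGroup.induced X _ e e.injective
  let _ := NormedSpace.induced ℝ X _ e
  exact hq.closedBallA_eq_convexHull_extremePoints_add_theta zero_le_one
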